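/- Let γ : ℝ × I → M₂(ℝ) (I ⊆ ℝ an open interval) be a smooth map such that for every fixed t, s ↦ γ(s,t) is a null curve parameterized by proper time: det γ = 1, ⟨∂ₛγ, ∂ₛγ⟩ = 0, ⟨∂ₛ²γ, ∂ₛ²γ⟩ = 4 everywhere; let κ(s,t) := −(1/16)⟨∂ₛ³γ, ∂ₛ³γ⟩ be the bending. If γ is a solution of the LIEN flow, i.e. ∂ₜγ = −2√2(κT + 2B) (equivalently ∂ₜγ = 2∂ₛ³γ − 6κ∂ₛγ), then κ satisfies the KdV equation ∂ₜκ + ∂ₛ³κ − 6κ∂ₛκ = 0 at every point. -/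

import Mathlib

noncomputable section

open Matrix Set

attribute [local instance] Matrix.normedAddCommGroup Matrix.normedSpace

/-- The space of 2×2 real matrices. -/
abbrev M2 : Type := Matrix (Fin 2) (Fin 2) ℝ

/-- The symmetric bilinear form of signature (−,−,+,+) on `M₂(ℝ)`, with `⟨X,X⟩ = -det X`. -/
def ip (X Y : M2) : ℝ :=
  (1 / 2) * (X 0 1 * Y 1 0 + X 1 0 * Y 0 1 - X 0 0 * Y 1 1 - X 1 1 * Y 0 0)

/-- Partial derivative with respect to the first variable `s` of a real-valued function. -/
def pdS (f : ℝ → ℝ → ℝ) (s t : ℝ) : ℝ := deriv (fun x => f x t) s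
/-- Partial derivative with respect to the second variable `t` of a real-valued function. -/
def pdT (f : ℝ → ℝ → ℝ) (s t : ℝ) : ℝ := deriv (fun y => f s y) t
/-- Partial derivative with respect to `s` of a matrix-valued function. -/
def pdSM (f : ℝ → ℝ → M2) (s t : ℝ) : M2 := deriv (fun x => f x t) s
/-- Partial derivative with respect to `t` of a matrix-valued function. -/
def pdTM (f : ℝ → ℝ → M2) (s t : ℝ) : M2 := deriv (fun y => f s y) t

/-- The bending `κ(s,t) = -(1/16)⟨∂ₛ³γ, ∂ₛ³γ⟩` of a one-parameter family of null curves
parameterized by proper time. -/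
def bend2 (γ : ℝ → ℝ → M2) (s t : ℝ) : ℝ :=
  -(1 / 16) * ip (pdSM (pdSM (pdSM γ)) s t) (pdSM (pdSM (pdSM γ)) s t)

/-! ### Auxiliary algebraic lemmas on `ip` -/

lemma ip_symm (X Y : M2) : ip X Y = ip Y X := by unfold ip; ring

lemma ip_self_eq_neg_det (X : M2) : ip X X = -X.det := by
  simp [ip, Matrix.det_fin_two]; ring

lemma ip_smul_left (a : ℝ) (X Y : M2) : ip (a • X) Y = a * ip X Y := by
  simp [ip, Matrix.smul_apply, smul_eq_mul]; ring

lemma ip_add_left (X Y Z : M2) : ip (X + Y) Z = ip X Z + ip Y Z := by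
  simp [ip, Matrix.add_apply]; ring

lemma ip_sub_left (X Y Z : M2) : ip (X - Y) Z = ip X Z - ip Y Z := by
  simp [ip, Matrix.sub_apply]; ring

/-- Any 5 vectors in the 4-dimensional quadratic space `(M₂(ℝ), ip)` have singular
Gram matrix. -/
lemma gram5 (v : Fin 5 → M2) :
    (Matrix.of fun i j : Fin 5 => ip (v i) (v j)).det = 0 := by
  have h : (Matrix.of fun i j : Fin 5 => ip (v i) (v j)) =
      (Matrix.of fun i k : Fin 5 =>
        (![v i 0 1, v i 1 0, v i 0 0, v i 1 1, 0] : Fin 5 → ℝ) k) *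
      (Matrix.of fun k j : Fin 5 =>
        (![(1/2) * v j 1 0, (1/2) * v j 0 1, -((1/2) * v j 1 1), -((1/2) * v j 0 0), 0]
          : Fin 5 → ℝ) k) := by
    ext i j
    simp [Matrix.mul_apply, Fin.sum_univ_five, ip]
    ring
  rw [h, Matrix.det_mul,
    Matrix.det_eq_zero_of_column_eq_zero 4 (fun i => rfl), zero_mul]

/-- Solving the singular Gram relation for `⟨γ'''' , γ''''⟩`. -/
lemma gram_solve (v : Fin 5 → M2) (K K1 : ℝ)
    (h00 : ip (v 0) (v 0) = -1) (h01 : ip (v 0) (v 1) = 0)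
    (h02 : ip (v 0) (v 2) = 0) (h03 : ip (v 0) (v 3) = 0)
    (h04 : ip (v 0) (v 4) = 4) (h11 : ip (v 1) (v 1) = 0)
    (h12 : ip (v 1) (v 2) = 0) (h13 : ip (v 1) (v 3) = -4)
    (h14 : ip (v 1) (v 4) = 0) (h22 : ip (v 2) (v 2) = 4)
    (h23 : ip (v 2) (v 3) = 0) (h24 : ip (v 2) (v 4) = 16 * K)
    (h33 : ip (v 3) (v 3) = -16 * K) (h34 : ip (v 3) (v 4) = -8 * K1) :
    ip (v 4) (v 4) = 64 * K * K - 16 := by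
  have hg := gram5 v
  have hm : (Matrix.of fun i j : Fin 5 => ip (v i) (v j)) =
      !![-1, 0, 0, 0, 4;
         0, 0, 0, -4, 0;
         0, 0, 4, 0, 16 * K;
         0, -4, 0, -16 * K, -8 * K1;
         4, 0, 16 * K, -8 * K1, ip (v 4) (v 4)] := by
    ext i j
    fin_cases i <;> fin_cases j <;>
      simp [Matrix.of_apply] <;>
      first
        | linarith [h00, h01, h02, h03, h04, h11, h12, h13, h14, h22, h23, h24, h33, h34]
        | (rw [ip_symm];
           linarith [h00, h01, h02, h03, h04, h11, h12, h13, h14, h22, h23, h24, h33, h34])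
  rw [hm] at hg
  simp [Matrix.det_succ_row_zero, Fin.sum_univ_succ, Fin.succAbove] at hg
  linear_combination hg / 64

/-! ### Calculus infrastructure: partial derivatives on `ℝ × ℝ` -/

section infra

variable {E : Type*} [NormedAddCommGroup E] [NormedSpace ℝ E]

/-- Partial derivative in the `s` (first) direction. -/
def DSd (f : ℝ × ℝ → E) (p : ℝ × ℝ) : E := fderiv ℝ f p (1, 0)
/-- Partial derivative in the `t` (second) direction. -/
def DTd (f : ℝ × ℝ → E) (p : ℝ × ℝ) : E := fderiv ℝ f p (0, 1)

variable {U : Set (ℝ × ℝ)} {f g : ℝ × ℝ → E}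

lemma contDiffOn_DSd (hf : ContDiffOn ℝ (⊤ : ℕ∞) f U) (hU : IsOpen U) :
    ContDiffOn ℝ (⊤ : ℕ∞) (DSd f) U :=
  (hf.fderiv_of_isOpen hU (by simp)).clm_apply contDiffOn_const

lemma contDiffOn_DTd (hf : ContDiffOn ℝ (⊤ : ℕ∞) f U) (hU : IsOpen U) :
    ContDiffOn ℝ (⊤ : ℕ∞) (DTd f) U :=
  (hf.fderiv_of_isOpen hU (by simp)).clm_apply contDiffOn_const

lemma hasDerivAt_DSd (hf : ContDiffOn ℝ (⊤ : ℕ∞) f U) (hU : IsOpen U) {s t : ℝ}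
    (hp : (s, t) ∈ U) : HasDerivAt (fun x => f (x, t)) (DSd f (s, t)) s := by
  have hd : DifferentiableAt ℝ f (s, t) :=
    (hf.contDiffAt (hU.mem_nhds hp)).differentiableAt (by simp)
  exact hd.hasFDerivAt.comp_hasDerivAt s (HasDerivAt.prodMk (hasDerivAt_id s) (hasDerivAt_const s t))

lemma hasDerivAt_DTd (hf : ContDiffOn ℝ (⊤ : ℕ∞) f U) (hU : IsOpen U) {s t : ℝ}
    (hp : (s, t) ∈ U) : HasDerivAt (fun y => f (s, y)) (DTd f (s, t)) t := by
  have hd : DifferentiableAt ℝ f (s, t) :=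
    (hf.contDiffAt (hU.mem_nhds hp)).differentiableAt (by simp)
  exact hd.hasFDerivAt.comp_hasDerivAt t (HasDerivAt.prodMk (hasDerivAt_const t s) (hasDerivAt_id t))

lemma DSd_congrOn (hU : IsOpen U) (h : Set.EqOn f g U) {p : ℝ × ℝ} (hp : p ∈ U) :
    DSd f p = DSd g p := by
  unfold DSd
  rw [Filter.EventuallyEq.fderiv_eq (h.eventuallyEq_of_mem (hU.mem_nhds hp))]

/-- Clairaut / Schwarz: mixed partial derivatives commute for smooth functions. -/
lemma DSd_DTd_swap (hf : ContDiffOn ℝ (⊤ : ℕ∞) f U) (hU : IsOpen U) {p : ℝ × ℝ} (hp : p ∈ U) :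
    DSd (DTd f) p = DTd (DSd f) p := by
  have hfd : DifferentiableAt ℝ (fderiv ℝ f) p :=
    ((hf.fderiv_of_isOpen (m := (⊤ : ℕ∞)) hU (by simp)).contDiffAt (hU.mem_nhds hp)).differentiableAt (by simp)
  have hsym := (hf.contDiffAt (hU.mem_nhds hp)).isSymmSndFDerivAt (by rw [minSmoothness_of_isRCLikeNormedField]; exact WithTop.coe_le_coe.mpr le_top)
  have h1 : ∀ v w : ℝ × ℝ,
      fderiv ℝ (fun q => fderiv ℝ f q w) p v = fderiv ℝ (fderiv ℝ f) p v w := by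
    intro v w
    rw [fderiv_clm_apply hfd (differentiableAt_const w)]
    simp
  show fderiv ℝ (fun q => fderiv ℝ f q (0, 1)) p (1, 0)
      = fderiv ℝ (fun q => fderiv ℝ f q (1, 0)) p (0, 1)
  rw [h1, h1]
  exact hsym _ _

end infra

lemma HasDerivAt.mentry {f : ℝ → M2} {f' : M2} {x : ℝ} (h : HasDerivAt f f' x)
    (i j : Fin 2) : HasDerivAt (fun y => f y i j) (f' i j) x := by
  exact (((ContinuousLinearMap.proj (R := ℝ) (φ := fun _ : Fin 2 => ℝ) j).comp
      (ContinuousLinearMap.proj (R := ℝ) (φ := fun _ : Fin 2 => Fin 2 → ℝ) i)).hasFDerivAt).comp_hasDerivAt x h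

lemma hasDerivAt_ip {f g : ℝ → M2} {f' g' : M2} {x : ℝ}
    (hf : HasDerivAt f f' x) (hg : HasDerivAt g g' x) :
    HasDerivAt (fun y => ip (f y) (g y)) (ip f' (g x) + ip (f x) g') x := by
  have h := (((((hf.mentry 0 1).mul (hg.mentry 1 0)).add
      ((hf.mentry 1 0).mul (hg.mentry 0 1))).sub
      ((hf.mentry 0 0).mul (hg.mentry 1 1))).sub
      ((hf.mentry 1 1).mul (hg.mentry 0 0))).const_mul ((1 : ℝ) / 2)
  have hval : ip f' (g x) + ip (f x) g' =
      1 / 2 * ((f' 0 1 * g x 1 0 + f x 0 1 * g' 1 0 +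
        (f' 1 0 * g x 0 1 + f x 1 0 * g' 0 1) -
        (f' 0 0 * g x 1 1 + f x 0 0 * g' 1 1)) -
        (f' 1 1 * g x 0 0 + f x 1 1 * g' 0 0)) := by
    unfold ip; ring
  rw [hval]
  exact h

/-! ### The family of curves and its `s`-derivatives -/

/-- The uncurried family. -/
def Fg (γ : ℝ → ℝ → M2) : ℝ × ℝ → M2 := fun p => γ p.1 p.2
def G1 (γ : ℝ → ℝ → M2) : ℝ × ℝ → M2 := DSd (Fg γ)
def G2 (γ : ℝ → ℝ → M2) : ℝ × ℝ → M2 := DSd (G1 γ)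
def G3 (γ : ℝ → ℝ → M2) : ℝ × ℝ → M2 := DSd (G2 γ)
def G4 (γ : ℝ → ℝ → M2) : ℝ × ℝ → M2 := DSd (G3 γ)
def G5 (γ : ℝ → ℝ → M2) : ℝ × ℝ → M2 := DSd (G4 γ)
def G6 (γ : ℝ → ℝ → M2) : ℝ × ℝ → M2 := DSd (G5 γ)

/-- The bending and its first three `s`-derivatives, in closed form. -/
def Kf (γ : ℝ → ℝ → M2) (p : ℝ × ℝ) : ℝ := -(1/16) * ip (G3 γ p) (G3 γ p)
def Kf1 (γ : ℝ → ℝ → M2) (p : ℝ × ℝ) : ℝ := -(1/8) * ip (G4 γ p) (G3 γ p)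
def Kf2 (γ : ℝ → ℝ → M2) (p : ℝ × ℝ) : ℝ :=
  -(1/8) * (ip (G5 γ p) (G3 γ p) + ip (G4 γ p) (G4 γ p))
def Kf3 (γ : ℝ → ℝ → M2) (p : ℝ × ℝ) : ℝ :=
  -(1/8) * (ip (G6 γ p) (G3 γ p) + 3 * ip (G5 γ p) (G4 γ p))

/-- If `γ : ℝ × I → AdS` is a smooth one-parameter family of null curves
parameterized by proper time (`det γ = 1`, `⟨∂ₛγ,∂ₛγ⟩ = 0`, `⟨∂ₛ²γ,∂ₛ²γ⟩ = 4`) which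
solves the LIEN flow `∂ₜγ = 2∂ₛ³γ − 6κ∂ₛγ` (i.e. `∂ₜγ = −2√2(κT + 2B)`), then the
bending `κ = bend2 γ` satisfies the KdV equation `∂ₜκ + ∂ₛ³κ − 6κ∂ₛκ = 0`. -/
theorem stmt9 (I : Set ℝ) (hIopen : IsOpen I) (hIint : I.OrdConnected)
    (γ : ℝ → ℝ → M2)
    (hγ : ContDiffOn ℝ (⊤ : ℕ∞) (fun p : ℝ × ℝ => γ p.1 p.2) (Set.univ ×ˢ I))
    (hdet : ∀ (s : ℝ), ∀ t ∈ I, (γ s t).det = 1)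
    (hnull : ∀ (s : ℝ), ∀ t ∈ I, ip (pdSM γ s t) (pdSM γ s t) = 0)
    (hproper : ∀ (s : ℝ), ∀ t ∈ I, ip (pdSM (pdSM γ) s t) (pdSM (pdSM γ) s t) = 4)
    (hlien : ∀ (s : ℝ), ∀ t ∈ I,
      pdTM γ s t = (2 : ℝ) • pdSM (pdSM (pdSM γ)) s t - (6 * bend2 γ s t) • pdSM γ s t) :
    ∀ (s : ℝ), ∀ t ∈ I,
      pdT (bend2 γ) s t + pdS (pdS (pdS (bend2 γ))) s t
        - 6 * bend2 γ s t * pdS (bend2 γ) s t = 0 := by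
  have hUopen : IsOpen ((Set.univ : Set ℝ) ×ˢ I) := isOpen_univ.prod hIopen
  have hmem : ∀ s t : ℝ, t ∈ I → ((s, t) : ℝ × ℝ) ∈ (Set.univ : Set ℝ) ×ˢ I :=
    fun s t ht => ⟨mem_univ s, ht⟩
  have hF : ContDiffOn ℝ (⊤ : ℕ∞) (Fg γ) ((Set.univ : Set ℝ) ×ˢ I) := hγ
  have h1s : ContDiffOn ℝ (⊤ : ℕ∞) (G1 γ) ((Set.univ : Set ℝ) ×ˢ I) := contDiffOn_DSd hF hUopen
  have h2s : ContDiffOn ℝ (⊤ : ℕ∞) (G2 γ) ((Set.univ : Set ℝ) ×ˢ I) := contDiffOn_DSd h1s hUopen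
  have h3s : ContDiffOn ℝ (⊤ : ℕ∞) (G3 γ) ((Set.univ : Set ℝ) ×ˢ I) := contDiffOn_DSd h2s hUopen
  have h4s : ContDiffOn ℝ (⊤ : ℕ∞) (G4 γ) ((Set.univ : Set ℝ) ×ˢ I) := contDiffOn_DSd h3s hUopen
  have h5s : ContDiffOn ℝ (⊤ : ℕ∞) (G5 γ) ((Set.univ : Set ℝ) ×ˢ I) := contDiffOn_DSd h4s hUopen
  -- `s`-line derivatives
  have L0 : ∀ s t : ℝ, t ∈ I → HasDerivAt (fun x => Fg γ (x, t)) (G1 γ (s, t)) s :=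
    fun s t ht => hasDerivAt_DSd hF hUopen (hmem s t ht)
  have L1 : ∀ s t : ℝ, t ∈ I → HasDerivAt (fun x => G1 γ (x, t)) (G2 γ (s, t)) s :=
    fun s t ht => hasDerivAt_DSd h1s hUopen (hmem s t ht)
  have L2 : ∀ s t : ℝ, t ∈ I → HasDerivAt (fun x => G2 γ (x, t)) (G3 γ (s, t)) s :=
    fun s t ht => hasDerivAt_DSd h2s hUopen (hmem s t ht)
  have L3 : ∀ s t : ℝ, t ∈ I → HasDerivAt (fun x => G3 γ (x, t)) (G4 γ (s, t)) s :=
    fun s t ht => hasDerivAt_DSd h3s hUopen (hmem s t ht)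
  have L4 : ∀ s t : ℝ, t ∈ I → HasDerivAt (fun x => G4 γ (x, t)) (G5 γ (s, t)) s :=
    fun s t ht => hasDerivAt_DSd h4s hUopen (hmem s t ht)
  have L5 : ∀ s t : ℝ, t ∈ I → HasDerivAt (fun x => G5 γ (x, t)) (G6 γ (s, t)) s :=
    fun s t ht => hasDerivAt_DSd h5s hUopen (hmem s t ht)
  -- identification of the curried partial derivatives
  have e1 : ∀ s t : ℝ, t ∈ I → pdSM γ s t = G1 γ (s, t) :=
    fun s t ht => (L0 s t ht).deriv
  have e2 : ∀ s t : ℝ, t ∈ I → pdSM (pdSM γ) s t = G2 γ (s, t) := by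
    intro s t ht
    have hfx : (fun x => pdSM γ x t) = fun x => G1 γ (x, t) := funext fun x => e1 x t ht
    show deriv (fun x => pdSM γ x t) s = G2 γ (s, t)
    rw [hfx]
    exact (L1 s t ht).deriv
  have e3 : ∀ s t : ℝ, t ∈ I → pdSM (pdSM (pdSM γ)) s t = G3 γ (s, t) := by
    intro s t ht
    have hfx : (fun x => pdSM (pdSM γ) x t) = fun x => G2 γ (x, t) :=
      funext fun x => e2 x t ht
    show deriv (fun x => pdSM (pdSM γ) x t) s = G3 γ (s, t)
    rw [hfx]
    exact (L2 s t ht).deriv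
  have hbend : ∀ s t : ℝ, t ∈ I → bend2 γ s t = Kf γ (s, t) := by
    intro s t ht
    unfold bend2 Kf
    rw [e3 s t ht]
  -- differentiating scalar identities along `s`
  have dstep : ∀ (A B A' B' : ℝ × ℝ → M2),
      ContDiffOn ℝ (⊤ : ℕ∞) A ((Set.univ : Set ℝ) ×ˢ I) →
      ContDiffOn ℝ (⊤ : ℕ∞) B ((Set.univ : Set ℝ) ×ˢ I) →
      A' = DSd A → B' = DSd B → ∀ (c : ℝ),
      (∀ s t : ℝ, t ∈ I → ip (A (s, t)) (B (s, t)) = c) →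
      ∀ s t : ℝ, t ∈ I →
        ip (A' (s, t)) (B (s, t)) + ip (A (s, t)) (B' (s, t)) = 0 := by
    intro A B A' B' hA hB hA' hB' c h s t ht
    subst hA' hB'
    have hL := hasDerivAt_ip (hasDerivAt_DSd hA hUopen (hmem s t ht))
      (hasDerivAt_DSd hB hUopen (hmem s t ht))
    have hC : (fun x => ip (A (x, t)) (B (x, t))) = fun _ => c :=
      funext fun x => h x t ht
    rw [hC] at hL
    exact hL.unique (hasDerivAt_const s c)
  -- basic scalar products
  have q00 : ∀ s t : ℝ, t ∈ I → ip (Fg γ (s, t)) (Fg γ (s, t)) = -1 := by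
    intro s t ht
    have : Fg γ (s, t) = γ s t := rfl
    rw [this, ip_self_eq_neg_det, hdet s t ht]
  have q11 : ∀ s t : ℝ, t ∈ I → ip (G1 γ (s, t)) (G1 γ (s, t)) = 0 := by
    intro s t ht; rw [← e1 s t ht]; exact hnull s t ht
  have q22 : ∀ s t : ℝ, t ∈ I → ip (G2 γ (s, t)) (G2 γ (s, t)) = 4 := by
    intro s t ht; rw [← e2 s t ht]; exact hproper s t ht
  have q10 : ∀ s t : ℝ, t ∈ I → ip (G1 γ (s, t)) (Fg γ (s, t)) = 0 := by
    intro s t ht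
    have h := dstep (Fg γ) (Fg γ) (G1 γ) (G1 γ) hF hF rfl rfl (-1) q00 s t ht
    have h2 := ip_symm (Fg γ (s, t)) (G1 γ (s, t))
    linarith
  have q21 : ∀ s t : ℝ, t ∈ I → ip (G2 γ (s, t)) (G1 γ (s, t)) = 0 := by
    intro s t ht
    have h := dstep (G1 γ) (G1 γ) (G2 γ) (G2 γ) h1s h1s rfl rfl 0 q11 s t ht
    have h2 := ip_symm (G1 γ (s, t)) (G2 γ (s, t))
    linarith
  have q20 : ∀ s t : ℝ, t ∈ I → ip (G2 γ (s, t)) (Fg γ (s, t)) = 0 := by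
    intro s t ht
    have h := dstep (G1 γ) (Fg γ) (G2 γ) (G1 γ) h1s hF rfl rfl 0 q10 s t ht
    have h2 := q11 s t ht
    linarith
  have q30 : ∀ s t : ℝ, t ∈ I → ip (G3 γ (s, t)) (Fg γ (s, t)) = 0 := by
    intro s t ht
    have h := dstep (G2 γ) (Fg γ) (G3 γ) (G1 γ) h2s hF rfl rfl 0 q20 s t ht
    have h2 := q21 s t ht
    have h3 := ip_symm (G2 γ (s, t)) (G1 γ (s, t))
    linarith
  have q31 : ∀ s t : ℝ, t ∈ I → ip (G3 γ (s, t)) (G1 γ (s, t)) = -4 := by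
    intro s t ht
    have h := dstep (G2 γ) (G1 γ) (G3 γ) (G2 γ) h2s h1s rfl rfl 0 q21 s t ht
    have h2 := q22 s t ht
    linarith
  have q32 : ∀ s t : ℝ, t ∈ I → ip (G3 γ (s, t)) (G2 γ (s, t)) = 0 := by
    intro s t ht
    have h := dstep (G2 γ) (G2 γ) (G3 γ) (G3 γ) h2s h2s rfl rfl 4 q22 s t ht
    have h2 := ip_symm (G2 γ (s, t)) (G3 γ (s, t))
    linarith
  have q40 : ∀ s t : ℝ, t ∈ I → ip (G4 γ (s, t)) (Fg γ (s, t)) = 4 := by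
    intro s t ht
    have h := dstep (G3 γ) (Fg γ) (G4 γ) (G1 γ) h3s hF rfl rfl 0 q30 s t ht
    have h2 := q31 s t ht
    linarith
  have q41 : ∀ s t : ℝ, t ∈ I → ip (G4 γ (s, t)) (G1 γ (s, t)) = 0 := by
    intro s t ht
    have h := dstep (G3 γ) (G1 γ) (G4 γ) (G2 γ) h3s h1s rfl rfl (-4) q31 s t ht
    have h2 := q32 s t ht
    linarith
  have q33 : ∀ s t : ℝ, t ∈ I → ip (G3 γ (s, t)) (G3 γ (s, t)) = -16 * Kf γ (s, t) := by
    intro s t ht; unfold Kf; ring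
  have q42 : ∀ s t : ℝ, t ∈ I → ip (G4 γ (s, t)) (G2 γ (s, t)) = 16 * Kf γ (s, t) := by
    intro s t ht
    have h := dstep (G3 γ) (G2 γ) (G4 γ) (G3 γ) h3s h2s rfl rfl 0 q32 s t ht
    have h2 := q33 s t ht
    linarith
  have q43 : ∀ s t : ℝ, t ∈ I → ip (G4 γ (s, t)) (G3 γ (s, t)) = -8 * Kf1 γ (s, t) := by
    intro s t ht; unfold Kf1; ring
  have q63 : ∀ s t : ℝ, t ∈ I → ip (G6 γ (s, t)) (G3 γ (s, t))
      = -8 * Kf3 γ (s, t) - 3 * ip (G5 γ (s, t)) (G4 γ (s, t)) := by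
    intro s t ht; unfold Kf3; ring
  have q13 : ∀ s t : ℝ, t ∈ I → ip (G1 γ (s, t)) (G3 γ (s, t)) = -4 :=
    fun s t ht => (ip_symm _ _).trans (q31 s t ht)
  have q23 : ∀ s t : ℝ, t ∈ I → ip (G2 γ (s, t)) (G3 γ (s, t)) = 0 :=
    fun s t ht => (ip_symm _ _).trans (q32 s t ht)
  -- the Gram determinant relation: ⟨γ'''',γ''''⟩ = 64κ² - 16
  have q44 : ∀ s t : ℝ, t ∈ I →
      ip (G4 γ (s, t)) (G4 γ (s, t)) = 64 * Kf γ (s, t) * Kf γ (s, t) - 16 := by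
    intro s t ht
    exact gram_solve ![Fg γ (s, t), G1 γ (s, t), G2 γ (s, t), G3 γ (s, t), G4 γ (s, t)]
      (Kf γ (s, t)) (Kf1 γ (s, t))
      (q00 s t ht)
      ((ip_symm _ _).trans (q10 s t ht))
      ((ip_symm _ _).trans (q20 s t ht))
      ((ip_symm _ _).trans (q30 s t ht))
      ((ip_symm _ _).trans (q40 s t ht))
      (q11 s t ht)
      ((ip_symm _ _).trans (q21 s t ht))
      (q13 s t ht)
      ((ip_symm _ _).trans (q41 s t ht))
      (q22 s t ht)
      (q23 s t ht)
      ((ip_symm _ _).trans (q42 s t ht))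
      (q33 s t ht)
      ((ip_symm _ _).trans (q43 s t ht))
  -- derivatives of the bending
  have hKd : ∀ s t : ℝ, t ∈ I → HasDerivAt (fun x => Kf γ (x, t)) (Kf1 γ (s, t)) s := by
    intro s t ht
    have h := (hasDerivAt_ip (L3 s t ht) (L3 s t ht)).const_mul (-(1/16 : ℝ))
    have hval : Kf1 γ (s, t) = -(1/16 : ℝ) *
        (ip (G4 γ (s, t)) (G3 γ (s, t)) + ip (G3 γ (s, t)) (G4 γ (s, t))) := by
      rw [ip_symm (G3 γ (s, t)) (G4 γ (s, t))]
      unfold Kf1; ring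
    rw [hval]
    exact h
  have hK1d : ∀ s t : ℝ, t ∈ I → HasDerivAt (fun x => Kf1 γ (x, t)) (Kf2 γ (s, t)) s := by
    intro s t ht
    exact (hasDerivAt_ip (L4 s t ht) (L3 s t ht)).const_mul (-(1/8 : ℝ))
  have hK2d : ∀ s t : ℝ, t ∈ I → HasDerivAt (fun x => Kf2 γ (x, t)) (Kf3 γ (s, t)) s := by
    intro s t ht
    have h := ((hasDerivAt_ip (L5 s t ht) (L3 s t ht)).add
      (hasDerivAt_ip (L4 s t ht) (L4 s t ht))).const_mul (-(1/8 : ℝ))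
    have hval : Kf3 γ (s, t) = -(1/8 : ℝ) *
        ((ip (G6 γ (s, t)) (G3 γ (s, t)) + ip (G5 γ (s, t)) (G4 γ (s, t))) +
         (ip (G5 γ (s, t)) (G4 γ (s, t)) + ip (G4 γ (s, t)) (G5 γ (s, t)))) := by
      rw [ip_symm (G4 γ (s, t)) (G5 γ (s, t))]
      unfold Kf3; ring
    rw [hval]
    exact h
  -- ⟨γ⁽⁵⁾, γ⁽⁴⁾⟩ = 64 κ κₛ, by differentiating q44
  have q54 : ∀ s t : ℝ, t ∈ I →
      ip (G5 γ (s, t)) (G4 γ (s, t)) = 64 * Kf γ (s, t) * Kf1 γ (s, t) := by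
    intro s t ht
    have hL := hasDerivAt_ip (L4 s t ht) (L4 s t ht)
    have hC : (fun x => ip (G4 γ (x, t)) (G4 γ (x, t))) =
        (fun x => 64 * Kf γ (x, t) * Kf γ (x, t) - 16) := funext fun x => q44 x t ht
    rw [hC] at hL
    have hR := (((hKd s t ht).const_mul 64).mul (hKd s t ht)).sub_const 16
    have huniq := hL.unique hR
    have h2 := ip_symm (G4 γ (s, t)) (G5 γ (s, t))
    linarith
  -- the LIEN flow in terms of the uncurried derivatives
  have hlien' : ∀ s t : ℝ, t ∈ I → DTd (Fg γ) (s, t)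
      = (2 : ℝ) • G3 γ (s, t) - (6 * Kf γ (s, t)) • G1 γ (s, t) := by
    intro s t ht
    have h0 : DTd (Fg γ) (s, t) = pdTM γ s t :=
      ((hasDerivAt_DTd hF hUopen (hmem s t ht)).deriv).symm
    rw [h0, hlien s t ht, e3 s t ht, e1 s t ht, hbend s t ht]
  -- three s-derivatives of the flow equation
  have hE1 : ∀ s t : ℝ, t ∈ I → DSd (DTd (Fg γ)) (s, t)
      = (2 : ℝ) • G4 γ (s, t) -
        ((6 * Kf γ (s, t)) • G2 γ (s, t) + (6 * Kf1 γ (s, t)) • G1 γ (s, t)) := by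
    intro s t ht
    have hL := hasDerivAt_DSd (contDiffOn_DTd hF hUopen) hUopen (hmem s t ht)
    have heq : (fun x => DTd (Fg γ) (x, t)) =
        fun x => (2 : ℝ) • G3 γ (x, t) - (6 * Kf γ (x, t)) • G1 γ (x, t) :=
      funext fun x => hlien' x t ht
    rw [heq] at hL
    have hR := ((L3 s t ht).const_smul (2 : ℝ)).sub
      (((hKd s t ht).const_mul 6).smul (L1 s t ht))
    exact hL.unique hR
  have hE2 : ∀ s t : ℝ, t ∈ I → DSd (DSd (DTd (Fg γ))) (s, t)
      = (2 : ℝ) • G5 γ (s, t) -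
        (((6 * Kf γ (s, t)) • G3 γ (s, t) + (6 * Kf1 γ (s, t)) • G2 γ (s, t)) +
         ((6 * Kf1 γ (s, t)) • G2 γ (s, t) + (6 * Kf2 γ (s, t)) • G1 γ (s, t))) := by
    intro s t ht
    have hL := hasDerivAt_DSd (contDiffOn_DSd (contDiffOn_DTd hF hUopen) hUopen)
      hUopen (hmem s t ht)
    have heq : (fun x => DSd (DTd (Fg γ)) (x, t)) =
        fun x => (2 : ℝ) • G4 γ (x, t) -
          ((6 * Kf γ (x, t)) • G2 γ (x, t) + (6 * Kf1 γ (x, t)) • G1 γ (x, t)) :=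
      funext fun x => hE1 x t ht
    rw [heq] at hL
    have hR := ((L4 s t ht).const_smul (2 : ℝ)).sub
      ((((hKd s t ht).const_mul 6).smul (L2 s t ht)).add
       (((hK1d s t ht).const_mul 6).smul (L1 s t ht)))
    exact hL.unique hR
  have hE3 : ∀ s t : ℝ, t ∈ I → DSd (DSd (DSd (DTd (Fg γ)))) (s, t)
      = (2 : ℝ) • G6 γ (s, t) -
        ((((6 * Kf γ (s, t)) • G4 γ (s, t) + (6 * Kf1 γ (s, t)) • G3 γ (s, t)) +
          ((6 * Kf1 γ (s, t)) • G3 γ (s, t) + (6 * Kf2 γ (s, t)) • G2 γ (s, t))) +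
         (((6 * Kf1 γ (s, t)) • G3 γ (s, t) + (6 * Kf2 γ (s, t)) • G2 γ (s, t)) +
          ((6 * Kf2 γ (s, t)) • G2 γ (s, t) + (6 * Kf3 γ (s, t)) • G1 γ (s, t)))) := by
    intro s t ht
    have hL := hasDerivAt_DSd
      (contDiffOn_DSd (contDiffOn_DSd (contDiffOn_DTd hF hUopen) hUopen) hUopen)
      hUopen (hmem s t ht)
    have heq : (fun x => DSd (DSd (DTd (Fg γ))) (x, t)) =
        fun x => (2 : ℝ) • G5 γ (x, t) -
          (((6 * Kf γ (x, t)) • G3 γ (x, t) + (6 * Kf1 γ (x, t)) • G2 γ (x, t)) +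
           ((6 * Kf1 γ (x, t)) • G2 γ (x, t) + (6 * Kf2 γ (x, t)) • G1 γ (x, t))) :=
      funext fun x => hE2 x t ht
    rw [heq] at hL
    have hR := ((L5 s t ht).const_smul (2 : ℝ)).sub
      (((((hKd s t ht).const_mul 6).smul (L3 s t ht)).add
        (((hK1d s t ht).const_mul 6).smul (L2 s t ht))).add
       ((((hK1d s t ht).const_mul 6).smul (L2 s t ht)).add
        (((hK2d s t ht).const_mul 6).smul (L1 s t ht))))
    exact hL.unique hR
  -- commuting partials: ∂ₜ∂ₛ³γ = ∂ₛ³∂ₜγ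
  have hDT1 : ∀ p ∈ (Set.univ : Set ℝ) ×ˢ I, DTd (G1 γ) p = DSd (DTd (Fg γ)) p :=
    fun p hp => (DSd_DTd_swap hF hUopen hp).symm
  have hDT2 : ∀ p ∈ (Set.univ : Set ℝ) ×ˢ I,
      DTd (G2 γ) p = DSd (DSd (DTd (Fg γ))) p := by
    intro p hp
    have ha : DTd (G2 γ) p = DSd (DTd (G1 γ)) p := (DSd_DTd_swap h1s hUopen hp).symm
    rw [ha]
    exact DSd_congrOn hUopen (fun q hq => hDT1 q hq) hp
  have hDT3 : ∀ p ∈ (Set.univ : Set ℝ) ×ˢ I,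
      DTd (G3 γ) p = DSd (DSd (DSd (DTd (Fg γ)))) p := by
    intro p hp
    have ha : DTd (G3 γ) p = DSd (DTd (G2 γ)) p := (DSd_DTd_swap h2s hUopen hp).symm
    rw [ha]
    exact DSd_congrOn hUopen (fun q hq => hDT2 q hq) hp
  -- the curried partial derivatives of the bending
  have hbS : ∀ s t : ℝ, t ∈ I → pdS (bend2 γ) s t = Kf1 γ (s, t) := by
    intro s t ht
    have hfx : (fun x => bend2 γ x t) = fun x => Kf γ (x, t) :=
      funext fun x => hbend x t ht
    show deriv (fun x => bend2 γ x t) s = _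
    rw [hfx]
    exact (hKd s t ht).deriv
  have hbSS : ∀ s t : ℝ, t ∈ I → pdS (pdS (bend2 γ)) s t = Kf2 γ (s, t) := by
    intro s t ht
    have hfx : (fun x => pdS (bend2 γ) x t) = fun x => Kf1 γ (x, t) :=
      funext fun x => hbS x t ht
    show deriv (fun x => pdS (bend2 γ) x t) s = _
    rw [hfx]
    exact (hK1d s t ht).deriv
  have hbSSS : ∀ s t : ℝ, t ∈ I → pdS (pdS (pdS (bend2 γ))) s t = Kf3 γ (s, t) := by
    intro s t ht
    have hfx : (fun x => pdS (pdS (bend2 γ)) x t) = fun x => Kf2 γ (x, t) :=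
      funext fun x => hbSS x t ht
    show deriv (fun x => pdS (pdS (bend2 γ)) x t) s = _
    rw [hfx]
    exact (hK2d s t ht).deriv
  have hbT : ∀ s t : ℝ, t ∈ I →
      pdT (bend2 γ) s t = -(1/8 : ℝ) * ip (DTd (G3 γ) (s, t)) (G3 γ (s, t)) := by
    intro s t ht
    have hev : (fun y => bend2 γ s y) =ᶠ[nhds t] (fun y => Kf γ (s, y)) :=
      Filter.eventuallyEq_of_mem (hIopen.mem_nhds ht) (fun y hy => hbend s y hy)
    show deriv (fun y => bend2 γ s y) t = _
    rw [hev.deriv_eq]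
    have h : HasDerivAt (fun y => Kf γ (s, y)) (-(1/16 : ℝ) *
        (ip (DTd (G3 γ) (s, t)) (G3 γ (s, t)) + ip (G3 γ (s, t)) (DTd (G3 γ) (s, t)))) t :=
      (hasDerivAt_ip (hasDerivAt_DTd h3s hUopen (hmem s t ht))
        (hasDerivAt_DTd h3s hUopen (hmem s t ht))).const_mul (-(1/16 : ℝ))
    rw [h.deriv, ip_symm (G3 γ (s, t)) (DTd (G3 γ) (s, t))]
    ring
  -- final assembly
  intro s t ht
  rw [hbT s t ht, hbSSS s t ht, hbS s t ht, hbend s t ht]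
  rw [hDT3 (s, t) (hmem s t ht), hE3 s t ht]
  simp only [ip_sub_left, ip_add_left, ip_smul_left]
  rw [q63 s t ht, q54 s t ht, q43 s t ht, q33 s t ht, q23 s t ht, q13 s t ht]
  ring
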